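/- arXiv:0907.0206 — 6 statements merged into one kernel-verified Lean document; each statement's English description precedes it below -/
import Mathlib

section
/- Let β be a Pisot number and let β_1, …, β_s be its non-real Galois conjugates with positive imaginary part (one from each complex-conjugate pair of roots of its minimal polynomial). Write φ_j := Arg(β_j)/(2π), so that β_j = |β_j|·e^{2πiφ_j}. If integers k_0, k_1, …, k_s satisfy k_0 + k_1 φ_1 + ⋯ + k_s φ_s = 0, then k_0 = k_1 = ⋯ = k_s = 0; in other words, the real numbers 1, φ_1, …, φ_s are linearly independent over ℚ. -/
open Polynomial

noncomputable section

/-- The β-transformation `x ↦ βx - ⌊βx⌋` on `[0,1)`. -/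
def betaT (β : ℝ) (x : ℝ) : ℝ := β * x - ⌊β * x⌋

/-- `x` has a purely periodic β-expansion. -/
def PurelyPeriodic (β x : ℝ) : Prop := ∃ p : ℕ, 1 ≤ p ∧ (betaT β)^[p] x = x

/-- `x` has a finite β-expansion. -/
def FiniteExp (β x : ℝ) : Prop := ∃ n : ℕ, (betaT β)^[n] x = 0

/-- `γ(β)`: the supremum of `c ∈ [0,1)` such that every rational in `[0,c]`
has a purely periodic β-expansion. -/
def gamma (β : ℝ) : ℝ :=
  sSup {c | c ∈ Set.Ico (0 : ℝ) 1 ∧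
    ∀ r : ℚ, 0 ≤ (r : ℝ) → (r : ℝ) ≤ c → PurelyPeriodic β (r : ℝ)}

/-- `β` is a Pisot number. -/
def IsPisot (β : ℝ) : Prop :=
  1 < β ∧ IsIntegral ℤ β ∧
    ∀ z : ℂ, aeval z (minpoly ℚ β) = 0 → z ≠ (β : ℂ) → ‖z‖ < 1

/-- `β` is a Pisot unit. -/
def IsPisotUnit (β : ℝ) : Prop := IsPisot β ∧ IsIntegral ℤ β⁻¹

/-- Property (F): every element of `ℤ[β, β⁻¹] ∩ [0,1)` has a finite β-expansion. -/
def PropertyF (β : ℝ) : Prop :=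
  ∀ x : ℝ, x ∈ Subring.closure ({β, β⁻¹} : Set ℝ) → x ∈ Set.Ico (0 : ℝ) 1 → FiniteExp β x

/-- All Galois conjugates of `β` other than `β` itself are non-real. -/
def NonRealConjugates (β : ℝ) : Prop :=
  ∀ z : ℂ, aeval z (minpoly ℚ β) = 0 → z ≠ (β : ℂ) → z.im ≠ 0

/-- The field `ℚ(β)` as a subfield of `ℝ`. -/
def Qbeta (β : ℝ) : IntermediateField ℚ ℝ := IntermediateField.adjoin ℚ {β}

/-- `β` as an element of `ℚ(β)`. -/
def genβ (β : ℝ) : Qbeta β := ⟨β, IntermediateField.mem_adjoin_simple_self ℚ β⟩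

/-- The set of β-integers. -/
def IntBeta (β : ℝ) : Set ℝ :=
  {x | 0 ≤ x ∧ ∃ k : ℕ, β ^ (-(k : ℤ)) * x ∈ Set.Ico (0 : ℝ) 1 ∧
    (betaT β)^[k] (β ^ (-(k : ℤ)) * x) = 0}

/-- The central tile `𝒯 = closure σ(Int(β))`. -/
def centralTile (β : ℝ) (σ : Qbeta β →+* ℂ) : Set ℂ :=
  closure {z | ∃ x : Qbeta β, (x : ℝ) ∈ IntBeta β ∧ z = σ x}

/-- `z` is a spiral point with respect to `X`: every ray of positive length issued from `z`
meets both the interior and the complement of `X`. -/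
def SpiralPoint (X : Set ℂ) (z : ℂ) : Prop :=
  ∀ ε : ℝ, 0 < ε → ∀ θ : ℝ,
    (∃ ρ : ℝ, ρ ∈ Set.Ico (0 : ℝ) ε ∧
      z + (ρ : ℂ) * Complex.exp (θ * Complex.I) ∈ interior X) ∧
    (∃ ρ : ℝ, ρ ∈ Set.Ico (0 : ℝ) ε ∧
      z + (ρ : ℂ) * Complex.exp (θ * Complex.I) ∉ X)

/-- The successor of `x` in `Int(β)`. -/
def succIn (β : ℝ) (x : ℝ) : ℝ := sInf {y | y ∈ IntBeta β ∧ x < y}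

/-- The subtile `𝒯_i` of the central tile. -/
def subtile (β : ℝ) (σ : Qbeta β →+* ℂ) (i : ℕ) : Set ℂ :=
  closure {z | ∃ x : Qbeta β, (x : ℝ) ∈ IntBeta β ∧
    succIn β (x : ℝ) - (x : ℝ) = (betaT β)^[i] 1 ∧ z = σ x}

open ComplexConjugate

/-!
Since `z / conj z = exp (2 i arg z)`, the relation on the arguments says `∏ z ^ m z = 1` over
the conjugates of `β`, where `m = k` on the upper half-plane, `m (conj z) = -m z`, and `m = 0`
on the real conjugates, in particular `m β = 0`. Choose a Galois automorphism `σ` sending `β` to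
the conjugate where `m` is maximal and take `log ‖·‖` of the transported relation:
`∑ m (σ z) log ‖z‖ = 0`. Every `z ≠ β` has `log ‖z‖ < 0`, while `∑ log ‖z‖ = log |N(β)| ≥ 0`
because the norm is a nonzero integer; this forces `m ∘ σ` to be constant, so `max m = m β = 0`.
The same argument for `-m` gives `m = 0`.
-/

theorem Finset.ne_zero_of_one_le_prod_norm {ι E : Type*} [NormedRing E] [NormOneClass E]
    {T : Finset ι} {f : ι → E} (h : 1 ≤ ∏ i ∈ T, ‖f i‖) : ∀ i ∈ T, f i ≠ 0 := by
  intro i hi h0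
  rw [Finset.prod_eq_zero hi (by rw [h0, norm_zero])] at h
  exact absurd h zero_lt_one.not_ge

theorem Finset.eq_of_le_of_sum_mul_eq_zero {ι : Type*} {T : Finset ι} {L e : ι → ℝ} {i₀ : ι}
    (hL : 0 ≤ ∑ i ∈ T, L i) (hL_neg : ∀ i ∈ T, i ≠ i₀ → L i < 0)
    (he : ∀ i ∈ T, e i ≤ e i₀) (he₀ : 0 ≤ e i₀) (hsum : ∑ i ∈ T, e i * L i = 0) :
    ∀ i ∈ T, e i = e i₀ := by
  have hterm : ∀ i ∈ T, (e i₀ - e i) * L i ≤ 0 := by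
    intro i hi
    rcases eq_or_ne i i₀ with rfl | hne
    · simp
    · exact mul_nonpos_of_nonneg_of_nonpos (sub_nonneg.mpr (he i hi)) (hL_neg i hi hne).le
  have htotal : ∑ i ∈ T, (e i₀ - e i) * L i = e i₀ * ∑ i ∈ T, L i := by
    simp only [sub_mul, Finset.sum_sub_distrib, hsum, sub_zero, Finset.mul_sum]
  have hzero := (Finset.sum_eq_zero_iff_of_nonpos hterm).mp
    (le_antisymm (Finset.sum_nonpos hterm) (htotal ▸ mul_nonneg he₀ hL))
  intro i hi
  rcases eq_or_ne i i₀ with rfl | hne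
  · rfl
  · have := (mul_eq_zero.mp (hzero i hi)).resolve_right (hL_neg i hi hne).ne
    linarith

section Galois

variable {F K : Type*} [Field F] [Field K] [Algebra F K]

theorem prod_aroots_toFinset_comp_algEquiv {M : Type*} [CommMonoid M] [DecidableEq K] (p : F[X])
    (σ : K ≃ₐ[F] K) (f : K → M) :
    ∏ x ∈ (p.aroots K).toFinset, f (σ x) = ∏ x ∈ (p.aroots K).toFinset, f x :=
  Finset.prod_equiv σ.toEquiv (by simp [aeval_algEquiv]) (fun _ _ => rfl)

theorem exists_algEquiv_apply_eq [Normal F K] {p : F[X]} (hp : Irreducible p) {x y : K}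
    (hx : aeval x p = 0) (hy : aeval y p = 0) : ∃ σ : K ≃ₐ[F] K, σ x = y :=
  (Normal.minpoly_eq_iff_mem_orbit K).mp
    ((minpoly.eq_of_irreducible hp hy).symm.trans (minpoly.eq_of_irreducible hp hx))

variable {E : Type*} [NormedField E]

theorem sum_mul_log_norm_eq_zero_of_prod_zpow_eq_one (ι : K →+* E) {T : Finset K}
    (hT : ∀ x ∈ T, ι x ≠ 0) {n : K → ℤ} (h : ∏ x ∈ T, x ^ n x = 1) :
    ∑ x ∈ T, (n x : ℝ) * Real.log ‖ι x‖ = 0 := by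
  have := congrArg (fun y => Real.log ‖ι y‖) h
  simp only [map_prod, map_zpow₀, norm_prod, norm_zpow, map_one, norm_one, Real.log_one] at this
  rw [Real.log_prod] at this
  · simpa only [Real.log_zpow] using this
  · intro x hx
    exact zpow_ne_zero _ (norm_ne_zero_iff.mpr (hT x hx))

theorem exponent_nonpos_of_prod_zpow_eq_one [Normal F K] [DecidableEq K] (ι : K →+* E)
    {p : F[X]} (hp : Irreducible p) {x₀ : K} (hx₀ : x₀ ∈ p.aroots K)
    (hlt : ∀ x ∈ p.aroots K, x ≠ x₀ → ‖ι x‖ < 1)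
    (hprod : 1 ≤ ∏ x ∈ (p.aroots K).toFinset, ‖ι x‖) {n : K → ℤ}
    (hn : ∏ x ∈ (p.aroots K).toFinset, x ^ n x = 1) (hn₀ : n x₀ = 0) :
    ∀ x ∈ p.aroots K, n x ≤ 0 := by
  set T := (p.aroots K).toFinset
  have hT0 : ∀ x ∈ T, ι x ≠ 0 := Finset.ne_zero_of_one_le_prod_norm hprod
  have hroot : ∀ x ∈ T, aeval x p = 0 := fun x hx =>
    (mem_aroots.mp (Multiset.mem_toFinset.mp hx)).2
  obtain ⟨x₁, hx₁, hmax⟩ := T.exists_max_image n ⟨x₀, Multiset.mem_toFinset.mpr hx₀⟩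
  obtain ⟨σ, hσ⟩ :=
    exists_algEquiv_apply_eq hp (hroot x₀ (Multiset.mem_toFinset.mpr hx₀)) (hroot x₁ hx₁)
  have hσT : ∀ (τ : K ≃ₐ[F] K), ∀ x ∈ T, τ x ∈ T := by
    intro τ x hx
    simpa [T, aeval_algEquiv] using hx
  have hnσ : ∏ x ∈ T, x ^ n (σ x) = 1 := by
    rw [← prod_aroots_toFinset_comp_algEquiv p σ.symm]
    simp only [AlgEquiv.apply_symm_apply, ← map_zpow₀, ← map_prod]
    rw [hn, map_one]
  have hconst := Finset.eq_of_le_of_sum_mul_eq_zero (i₀ := x₀) (L := fun x => Real.log ‖ι x‖)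
    (e := fun x => (n (σ x) : ℝ)) ?_ ?_ ?_ ?_
    (sum_mul_log_norm_eq_zero_of_prod_zpow_eq_one ι hT0 hnσ)
  · have h := hconst (σ.symm x₀) (hσT _ _ (Multiset.mem_toFinset.mpr hx₀))
    simp only [AlgEquiv.apply_symm_apply, hσ, hn₀, Int.cast_zero] at h
    intro x hx
    exact (hmax x (Multiset.mem_toFinset.mpr hx)).trans (by exact_mod_cast h.ge)
  · rw [← Real.log_prod fun x hx => norm_ne_zero_iff.mpr (hT0 x hx)]
    exact Real.log_nonneg hprod
  · intro x hx hne
    exact Real.log_neg (norm_pos_iff.mpr (hT0 x hx))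
      (hlt x (Multiset.mem_toFinset.mp hx) hne)
  · intro x hx
    simpa only [hσ, Int.cast_le] using hmax (σ x) (hσT σ x hx)
  · exact_mod_cast hσ ▸ hn₀ ▸ hmax x₀ (Multiset.mem_toFinset.mpr hx₀)

theorem exponent_eq_zero_of_prod_zpow_eq_one [Normal F K] [DecidableEq K] (ι : K →+* E)
    {p : F[X]} (hp : Irreducible p) {x₀ : K} (hx₀ : x₀ ∈ p.aroots K)
    (hlt : ∀ x ∈ p.aroots K, x ≠ x₀ → ‖ι x‖ < 1)
    (hprod : 1 ≤ ∏ x ∈ (p.aroots K).toFinset, ‖ι x‖) {n : K → ℤ}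
    (hn : ∏ x ∈ (p.aroots K).toFinset, x ^ n x = 1) (hn₀ : n x₀ = 0) :
    ∀ x ∈ p.aroots K, n x = 0 := by
  have hneg : ∏ x ∈ (p.aroots K).toFinset, x ^ (-n x) = 1 := by
    simp only [zpow_neg, Finset.prod_inv_distrib, hn, inv_one]
  intro x hx
  exact le_antisymm (exponent_nonpos_of_prod_zpow_eq_one ι hp hx₀ hlt hprod hn hn₀ x hx)
    (neg_nonpos.mp (exponent_nonpos_of_prod_zpow_eq_one ι hp hx₀ hlt hprod hneg
      (by rw [hn₀, neg_zero]) x hx))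

end Galois

theorem one_le_prod_norm_aroots {α : ℝ} (hα : IsIntegral ℤ α) (hα₀ : α ≠ 0) :
    1 ≤ ∏ z ∈ ((minpoly ℚ α).aroots ℂ).toFinset, ‖z‖ := by
  classical
  have hαQ : IsIntegral ℚ α := hα.tower_top
  have hnodup : ((minpoly ℚ α).aroots ℂ).Nodup :=
    nodup_roots (minpoly.irreducible hαQ).separable.map
  have hcoeff := (IsAlgClosed.splits ((minpoly ℚ α).map (algebraMap ℚ ℂ))
    ).coeff_zero_eq_prod_roots_of_monic ((minpoly.monic hαQ).map _)
  have hc : (minpoly ℚ α).coeff 0 = ((minpoly ℤ α).coeff 0 : ℚ) := by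
    rw [minpoly.isIntegrallyClosed_eq_field_fractions' ℚ hα, coeff_map, eq_intCast]
  have hc₀ : (minpoly ℤ α).coeff 0 ≠ 0 := by
    exact_mod_cast hc ▸ minpoly.coeff_zero_ne_zero hαQ hα₀
  rw [← norm_prod, Finset.prod_eq_multiset_prod, Multiset.toFinset_val, hnodup.dedup,
    Multiset.map_id', aroots_def]
  have := congrArg norm hcoeff
  rw [norm_mul, norm_pow, norm_neg, norm_one, one_pow, one_mul, coeff_map, hc] at this
  rw [← this, map_intCast, Complex.norm_intCast]
  exact_mod_cast Int.one_le_abs hc₀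

theorem exponent_eq_zero_of_prod_complex_roots_zpow_eq_one {F : Type*} [Field F] [Algebra F ℂ]
    {p : F[X]} (hp : Irreducible p) {z₀ : ℂ} (hz₀ : z₀ ∈ p.aroots ℂ)
    (hlt : ∀ z ∈ p.aroots ℂ, z ≠ z₀ → ‖z‖ < 1) (hprod : 1 ≤ ∏ z ∈ (p.aroots ℂ).toFinset, ‖z‖)
    {m : ℂ → ℤ} (hm : ∏ z ∈ (p.aroots ℂ).toFinset, z ^ m z = 1) (hm₀ : m z₀ = 0) :
    ∀ z ∈ p.aroots ℂ, m z = 0 := by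
  classical
  let ι : p.SplittingField →+* ℂ :=
    (SplittingField.lift p (IsAlgClosed.splits _) : p.SplittingField →ₐ[F] ℂ)
  have hroots : p.aroots ℂ = (p.aroots p.SplittingField).map ι := by
    have hsplit : (p.map (algebraMap F p.SplittingField)).Splits := SplittingField.splits p
    rw [aroots_def, aroots_def, ← hsplit.roots_map, map_map, AlgHom.comp_algebraMap]
  have hprod_image {M : Type} [CommMonoid M] (f : ℂ → M) :
      ∏ z ∈ (p.aroots ℂ).toFinset, f z =
        ∏ x ∈ (p.aroots p.SplittingField).toFinset, f (ι x) := by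
    rw [hroots, Multiset.toFinset_map, Finset.prod_image fun x _ y _ h => ι.injective h]
  obtain ⟨x₀, hx₀, hιx₀⟩ := Multiset.mem_map.mp (hroots ▸ hz₀)
  have hzero := exponent_eq_zero_of_prod_zpow_eq_one ι hp hx₀ (n := fun x => m (ι x)) ?_
    (by rwa [← hprod_image]) (ι.injective ?_) (by simpa [hιx₀] using hm₀)
  · intro z hz
    obtain ⟨x, hx, rfl⟩ := Multiset.mem_map.mp (hroots ▸ hz)
    exact hzero x hx
  · intro x hx hne
    exact hlt (ι x) (hroots ▸ Multiset.mem_map_of_mem _ hx) (hιx₀ ▸ ι.injective.ne hne)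
  · rw [map_prod, map_one]
    simp only [map_zpow₀]
    rwa [← hprod_image fun z => z ^ m z]

theorem conj_mem_aroots {p : ℚ[X]} {z : ℂ} (hz : z ∈ p.aroots ℂ) : conj z ∈ p.aroots ℂ := by
  rw [mem_aroots] at hz ⊢
  refine ⟨hz.1, ?_⟩
  simpa [hz.2] using aeval_algHom_apply (Complex.conjAe.restrictScalars ℚ) z p

theorem Complex.div_conj_eq_exp {z : ℂ} (hz : z ≠ 0) : z / conj z = exp (2 * arg z * I) := by
  have hr : (‖z‖ : ℂ) ≠ 0 := by simpa using hz
  have hconj : conj z = ‖z‖ * exp (-(arg z * I)) := by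
    conv_lhs => rw [← norm_mul_exp_arg_mul_I z]
    rw [map_mul, conj_ofReal, ← exp_conj, map_mul, conj_ofReal, conj_I, mul_neg]
  rw [hconj, div_eq_iff (mul_ne_zero hr (exp_ne_zero _))]
  conv_lhs => rw [← norm_mul_exp_arg_mul_I z]
  rw [mul_left_comm, ← exp_add]
  ring_nf

theorem prod_zpow_sub_conj {R : Finset ℂ} (hR : ∀ z ∈ R, conj z ∈ R) (h0 : ∀ z ∈ R, z ≠ 0)
    (a : ℂ → ℤ) : ∏ z ∈ R, z ^ (a z - a (conj z)) = ∏ z ∈ R, (z / conj z) ^ a z := by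
  have hreindex : ∏ z ∈ R, z ^ (-a (conj z)) = ∏ z ∈ R, (conj z) ^ (-a z) :=
    Finset.prod_nbij' conj conj hR hR (by simp) (by simp) (by simp)
  calc ∏ z ∈ R, z ^ (a z - a (conj z))
      = (∏ z ∈ R, z ^ a z) * ∏ z ∈ R, z ^ (-a (conj z)) := by
        rw [← Finset.prod_mul_distrib]
        exact Finset.prod_congr rfl fun z hz => by rw [sub_eq_add_neg, zpow_add₀ (h0 z hz)]
    _ = ∏ z ∈ R, (z / conj z) ^ a z := by
        rw [hreindex, ← Finset.prod_mul_distrib]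
        simp only [div_eq_mul_inv, mul_zpow, inv_zpow, zpow_neg]

theorem prod_div_conj_zpow_eq_one {S : Finset ℂ} (hS : ∀ z ∈ S, z ≠ 0) {k₀ : ℤ} {k : ℂ → ℤ}
    (h : (k₀ : ℝ) + ∑ z ∈ S, (k z : ℝ) * (Complex.arg z / (2 * Real.pi)) = 0) :
    ∏ z ∈ S, (z / conj z) ^ k z = 1 := by
  have hsum : ∑ z ∈ S, (k z : ℝ) * Complex.arg z = -(2 * Real.pi * k₀) := by
    simp only [mul_div_assoc', ← Finset.sum_div] at h
    field_simp at h
    linarith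
  calc ∏ z ∈ S, (z / conj z) ^ k z
      = ∏ z ∈ S, Complex.exp (k z * (2 * Complex.arg z * Complex.I)) :=
        Finset.prod_congr rfl fun z hz => by
          rw [Complex.div_conj_eq_exp (hS z hz), Complex.exp_int_mul]
    _ = Complex.exp (((-2 * k₀ : ℤ) : ℂ) * (2 * Real.pi * Complex.I)) := by
        rw [← Complex.exp_sum]
        congr 1
        calc ∑ z ∈ S, (k z : ℂ) * (2 * Complex.arg z * Complex.I)
            = ((∑ z ∈ S, (k z : ℝ) * Complex.arg z : ℝ) : ℂ) * (2 * Complex.I) := by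
              push_cast
              rw [Finset.sum_mul]
              exact Finset.sum_congr rfl fun z _ => by ring
          _ = _ := by
              rw [hsum]
              push_cast
              ring
    _ = 1 := Complex.exp_int_mul_two_pi_mul_I _

theorem IsPisot.exponent_eq_zero_of_prod_conjugates_zpow_eq_one {β : ℝ} (hβ : IsPisot β)
    {m : ℂ → ℤ} (hm : ∏ z ∈ ((minpoly ℚ β).aroots ℂ).toFinset, z ^ m z = 1) (hmβ : m β = 0) :
    ∀ z ∈ (minpoly ℚ β).aroots ℂ, m z = 0 := by
  obtain ⟨hβ1, hβZ, hconj⟩ := hβ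
  have hβQ : IsIntegral ℚ β := hβZ.tower_top
  have hβroot : (β : ℂ) ∈ (minpoly ℚ β).aroots ℂ := by
    refine mem_aroots.mpr ⟨minpoly.ne_zero hβQ, ?_⟩
    simpa using aeval_algebraMap_apply ℂ β (minpoly ℚ β)
  exact exponent_eq_zero_of_prod_complex_roots_zpow_eq_one (minpoly.irreducible hβQ) hβroot
    (fun z hz => hconj z (mem_aroots.mp hz).2)
    (one_le_prod_norm_aroots hβZ (zero_lt_one.trans hβ1).ne') hm hmβ

theorem statement6 (β : ℝ) (hp : IsPisot β) (k0 : ℤ) (k : ℂ → ℤ)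
    (h : (k0 : ℝ) + ∑ z ∈ ((minpoly ℚ β).aroots ℂ).toFinset.filter (fun z => 0 < z.im),
        (k z : ℝ) * (Complex.arg z / (2 * Real.pi)) = 0) :
    k0 = 0 ∧
      ∀ z ∈ ((minpoly ℚ β).aroots ℂ).toFinset.filter (fun z => 0 < z.im), k z = 0 := by
  classical
  set R := ((minpoly ℚ β).aroots ℂ).toFinset
  have hR0 : ∀ z ∈ R, z ≠ 0 :=
    Finset.ne_zero_of_one_le_prod_norm (one_le_prod_norm_aroots hp.2.1 (zero_lt_one.trans hp.1).ne')
  let a : ℂ → ℤ := fun z => if 0 < z.im then k z else 0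
  have hrel : ∏ z ∈ R, z ^ (a z - a (conj z)) = 1 := by
    have hconj : ∀ z ∈ R, conj z ∈ R := fun z hz =>
      Multiset.mem_toFinset.mpr (conj_mem_aroots (Multiset.mem_toFinset.mp hz))
    rw [prod_zpow_sub_conj hconj hR0,
      ← prod_div_conj_zpow_eq_one (fun z hz => hR0 z (Finset.mem_filter.mp hz).1) h,
      Finset.prod_filter]
    exact Finset.prod_congr rfl fun z _ => by simp only [a]; split_ifs <;> simp
  have hzero := hp.exponent_eq_zero_of_prod_conjugates_zpow_eq_one hrel (by simp [a])
  have hk : ∀ z ∈ R.filter (fun z => 0 < z.im), k z = 0 := by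
    intro z hz
    obtain ⟨hzR, him⟩ := Finset.mem_filter.mp hz
    simpa [a, him, not_lt.mpr him.le] using hzero z (Multiset.mem_toFinset.mp hzR)
  refine ⟨?_, hk⟩
  rwa [Finset.sum_eq_zero fun z hz => by rw [hk z hz, Int.cast_zero, zero_mul], add_zero,
    Int.cast_eq_zero] at h

end
end

section
/- Let β be a cubic Pisot unit. For every integer i ≥ 1, either T_β^i(1) = 0 or T_β^i(1) is irrational, where T_β^i(1) is the i-th iterate of the map t ↦ βt − ⌊βt⌋ starting at 1. -/
open Polynomial

noncomputable section

/-! `T_β` maps `ℤ[β]` into itself, so every `T_β^i(1)` is an algebraic integer; for `i ≥ 1` it also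
lies in `[0, 1)`, and a rational algebraic integer in `[0, 1)` is `0`. -/

theorem betaT_mem_Ico (β x : ℝ) : betaT β x ∈ Set.Ico (0 : ℝ) 1 :=
  ⟨Int.fract_nonneg _, Int.fract_lt_one _⟩

theorem isIntegral_betaT {β x : ℝ} (hβ : IsIntegral ℤ β) (hx : IsIntegral ℤ x) :
    IsIntegral ℤ (betaT β x) :=
  (hβ.mul hx).sub (isIntegral_algebraMap (x := ⌊β * x⌋))

theorem isIntegral_betaT_iterate {β x : ℝ} (hβ : IsIntegral ℤ β) (hx : IsIntegral ℤ x) (n : ℕ) :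
    IsIntegral ℤ ((betaT β)^[n] x) := by
  induction n with
  | zero => exact hx
  | succ n ih => rw [Function.iterate_succ_apply']; exact isIntegral_betaT hβ ih

theorem IsIntegral.eq_zero_or_irrational_of_mem_Ico {x : ℝ} (hx : IsIntegral ℤ x)
    (hx01 : x ∈ Set.Ico (0 : ℝ) 1) : x = 0 ∨ Irrational x := by
  refine or_iff_not_imp_right.mpr fun hrat ↦ ?_
  obtain ⟨q, rfl⟩ := not_not.mp hrat
  have hq : IsIntegral ℤ q := (isIntegral_algebraMap_iff (algebraMap ℚ ℝ).injective).mp hx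
  obtain ⟨z, rfl⟩ := IsIntegrallyClosed.isIntegral_iff.mp hq
  obtain ⟨h0, h1⟩ := hx01
  have hz : z = 0 := by
    simp only [eq_intCast, Rat.cast_intCast] at h0 h1
    have : (0 : ℤ) ≤ z := by exact_mod_cast h0
    have : z < 1 := by exact_mod_cast h1
    omega
  simp [hz]

theorem statement7_general (β : ℝ) (hpu : IsPisotUnit β) (i : ℕ) (hi : 1 ≤ i) :
    (betaT β)^[i] 1 = 0 ∨ Irrational ((betaT β)^[i] 1) := by
  have hβ : IsIntegral ℤ β := hpu.1.2.1
  obtain ⟨j, rfl⟩ := Nat.exists_eq_add_of_le' hi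
  refine (isIntegral_betaT_iterate hβ isIntegral_one _).eq_zero_or_irrational_of_mem_Ico ?_
  rw [Function.iterate_succ_apply']
  exact betaT_mem_Ico β _

theorem statement7 (β : ℝ) (hpu : IsPisotUnit β)
    (hdeg : (minpoly ℚ β).natDegree = 3) (i : ℕ) (hi : 1 ≤ i) :
    (betaT β)^[i] 1 = 0 ∨ Irrational ((betaT β)^[i] 1) :=
  statement7_general β hpu i hi

end
end

section
/- Let β be a cubic Pisot unit with non-real Galois conjugates and let σ : ℚ(β) → ℂ be a field embedding with σ(β) ∉ ℝ. If a : ℤ → ℤ is a Ξ(β)-representation of σ(x) for some x ∈ ℚ(β), then its left tail is eventually periodic: there exist an integer p ≥ 1 and an integer N ≥ 0 such that a_{−n−p} = a_{−n} for every n ≥ N. -/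
open Polynomial

noncomputable section

/-- A bi-infinite digit sequence is admissible: digits lie in `{0, …, ⌈β⌉ - 1}` and every
suffix sums to less than `1`. -/
def AdmissibleSeq (β : ℝ) (a : ℤ → ℤ) : Prop :=
  (∀ n : ℤ, 0 ≤ a n ∧ a n ≤ ⌈β⌉ - 1) ∧
    ∀ k : ℤ, (∑' j : ℕ, (a (k + j + 1) : ℝ) * β ^ (-(j : ℤ) - 1)) < 1

/-- `a : ℤ → ℤ` is a `Ξ(β)`-representation of `z ∈ ℂ`. -/
def XiRep (β : ℝ) (σ : Qbeta β →+* ℂ) (z : ℂ) (a : ℤ → ℤ) : Prop :=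
  AdmissibleSeq β a ∧
    ∃ y : Qbeta β, (y : ℝ) ∈ Subring.closure ({β, β⁻¹} : Set ℝ) ∧
      (y : ℝ) = (∑' j : ℕ, (a ((j : ℤ) + 1) : ℝ) * β ^ (-(j : ℤ) - 1)) ∧
      z = (∑' j : ℕ, (a (-(j : ℤ)) : ℂ) * (σ (genβ β)) ^ j) + σ y

/-!
Set `W₀ = x - y` and `W_{m+1} = (W_m - a_{-m}) / β` in `ℚ(β)`. In the real embedding
`W_m = β^{-m} x - t_m`, where `t_m ∈ [0, 1)` is the admissible tail to the right of position
`-m`; under `σ`, `W_m` is the head series `∑ a_{-m-j} σ(β)^j`, bounded because `|σ(β)| < 1`.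
A cubic field has no embeddings besides these two and the conjugate of `σ`, and since `β` is a
unit a fixed integer multiple of every `W_m` is an algebraic integer, so the `W_m` take only
finitely many values. The digit `a_{-m} = ⌊β t_{m+1}⌋ = ⌊-β W_{m+1} + β^{-m} x⌋` is eventually a
function of `W_{m+1}` alone, because `β^{-m} x → 0` with constant sign. Hence `W_m` is eventually a
function of `W_{m+1}`, and a sequence with finite range that is eventually determined backwards
is eventually periodic.
-/

open Filter Topology

theorem Function.exists_eventually_periodic_of_eq_apply_succ {α : Type*} {w : ℕ → α}
    (hw : (Set.range w).Finite) (f : α → α) (M : ℕ) (hf : ∀ m, M ≤ m → w m = f (w (m + 1))) :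
    ∃ p, 1 ≤ p ∧ ∃ N, ∀ m, N ≤ m → w (m + p) = w m := by
  have hiter : ∀ k m, M ≤ m → w m = f^[k] (w (m + k)) := by
    intro k
    induction k with
    | zero => simp
    | succ k ih =>
      intro m hm
      rw [ih m hm, hf (m + k) (by omega), ← Function.iterate_succ_apply, ← add_assoc]
  have : Finite (Set.range w) := hw
  obtain ⟨⟨v, _⟩, hfiber⟩ := Finite.exists_infinite_fiber (Set.rangeFactorization w)
  have hv : {n | w n = v}.Infinite := by
    simpa [← Set.infinite_coe_iff, Set.preimage, Set.rangeFactorization, Subtype.ext_iff]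
      using hfiber
  obtain ⟨n₁, hn₁ : w n₁ = v, hMn₁⟩ := hv.exists_gt M
  obtain ⟨n₂, hn₂ : w n₂ = v, hn₁₂⟩ := hv.exists_gt n₁
  -- `v` is a periodic point of `f`, and every late `w m` lies on its backward orbit
  have hper : f^[n₂ - n₁] v = v := by
    have := hiter (n₂ - n₁) n₁ hMn₁.le
    rwa [Nat.add_sub_cancel' hn₁₂.le, hn₁, hn₂, eq_comm] at this
  refine ⟨n₂ - n₁, by omega, M, fun m hm => ?_⟩
  obtain ⟨n, hn : w n = v, hmn⟩ := hv.exists_gt (m + (n₂ - n₁))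
  calc w (m + (n₂ - n₁)) = f^[n - (m + (n₂ - n₁))] v := by
        rw [hiter (n - (m + (n₂ - n₁))) _ (by omega), Nat.add_sub_cancel' hmn.le, hn]
    _ = f^[n - (m + (n₂ - n₁)) + (n₂ - n₁)] v := by rw [Function.iterate_add_apply, hper]
    _ = w m := by rw [hiter (n - m) m hm, Nat.add_sub_cancel' (by omega), hn]; congr 1; omega

theorem eventually_floor_add_eq_floor (c : ℝ) : ∀ᶠ t in 𝓝[≥] (0 : ℝ), ⌊c + t⌋ = ⌊c⌋ := by
  have hlt : ∀ᶠ t in 𝓝[≥] (0 : ℝ), t < ⌊c⌋ + 1 - c :=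
    nhdsWithin_le_nhds (eventually_lt_nhds (by linarith [Int.lt_floor_add_one c]))
  filter_upwards [self_mem_nhdsWithin, hlt] with t (ht₀ : 0 ≤ t) ht
  rw [Int.floor_eq_iff]
  constructor <;> linarith [Int.floor_le c]

theorem eventually_floor_add_eq_ceil_sub_one (c : ℝ) :
    ∀ᶠ t in 𝓝[<] (0 : ℝ), ⌊c + t⌋ = ⌈c⌉ - 1 := by
  have hgt : ∀ᶠ t in 𝓝[<] (0 : ℝ), ⌈c⌉ - 1 - c < t :=
    nhdsWithin_le_nhds (eventually_gt_nhds (by linarith [Int.ceil_lt_add_one c]))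
  filter_upwards [self_mem_nhdsWithin, hgt] with t (ht₀ : t < 0) ht
  rw [Int.floor_eq_iff]
  push_cast
  constructor <;> linarith [Int.le_ceil c]

theorem exists_eventually_floor_add_eq {ι : Type*} {l : Filter ι} {S : Set ℝ} (hS : S.Finite)
    {t : ι → ℝ} (ht : Tendsto t l (𝓝 0)) (hsign : (∀ i, 0 ≤ t i) ∨ ∀ i, t i < 0) :
    ∃ f : ℝ → ℤ, ∀ᶠ i in l, ∀ c ∈ S, ⌊c + t i⌋ = f c := by
  rcases hsign with hnonneg | hneg
  · have ht' : Tendsto t l (𝓝[≥] 0) := tendsto_nhdsWithin_iff.2 ⟨ht, .of_forall hnonneg⟩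
    exact ⟨Int.floor,
      hS.eventually_all.2 fun c _ => ht'.eventually (eventually_floor_add_eq_floor c)⟩
  · have ht' : Tendsto t l (𝓝[<] 0) := tendsto_nhdsWithin_iff.2 ⟨ht, .of_forall hneg⟩
    exact ⟨fun c => ⌈c⌉ - 1,
      hS.eventually_all.2 fun c _ => ht'.eventually (eventually_floor_add_eq_ceil_sub_one c)⟩

section PowerSeries

variable {𝕜 : Type*} [NormedField 𝕜] {c : ℕ → 𝕜} {D : ℝ} {r : 𝕜}

theorem tsum_mul_pow_eq_add (hs : Summable fun j => c j * r ^ j) :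
    ∑' j, c j * r ^ j = c 0 + r * ∑' j, c (j + 1) * r ^ j := by
  rw [hs.tsum_eq_zero_add, ← tsum_mul_left]
  congr 1
  · simp
  · exact tsum_congr fun j => by ring

theorem norm_tsum_mul_pow_le (hc : ∀ j, ‖c j‖ ≤ D) (hr : ‖r‖ < 1) :
    ‖∑' j, c j * r ^ j‖ ≤ D * (1 - ‖r‖)⁻¹ := by
  refine tsum_of_norm_bounded ((hasSum_geometric_of_lt_one (norm_nonneg r) hr).mul_left D)
    fun j => ?_
  rw [norm_mul, norm_pow]
  gcongr
  exact hc j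

theorem summable_mul_pow_of_norm_le [CompleteSpace 𝕜] (hc : ∀ j, ‖c j‖ ≤ D) (hr : ‖r‖ < 1) :
    Summable fun j => c j * r ^ j :=
  .of_norm_bounded ((summable_geometric_of_lt_one (norm_nonneg r) hr).mul_left D) fun j => by
    rw [norm_mul, norm_pow]
    gcongr
    exact hc j

end PowerSeries

def headSum (r : ℂ) (a : ℤ → ℤ) (k : ℤ) : ℂ := ∑' j : ℕ, (a (k - j) : ℂ) * r ^ j

def tailSum (β : ℝ) (a : ℤ → ℤ) (k : ℤ) : ℝ := ∑' j : ℕ, (a (k + j + 1) : ℝ) * β ^ (-(j : ℤ) - 1)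

section DigitSums

variable {a : ℤ → ℤ} {D : ℝ}

theorem headSum_eq_add {r : ℂ} (hD : ∀ n, |(a n : ℝ)| ≤ D) (hr : ‖r‖ < 1) (k : ℤ) :
    headSum r a k = a k + r * headSum r a (k - 1) := by
  rw [headSum, tsum_mul_pow_eq_add (summable_mul_pow_of_norm_le (D := D)
    (fun j => by rw [Complex.norm_intCast]; exact hD _) hr)]
  simp only [headSum, Nat.cast_zero, sub_zero, Nat.cast_succ]
  congr 3 with j
  ring_nf

theorem norm_headSum_le {r : ℂ} (hD : ∀ n, |(a n : ℝ)| ≤ D) (hr : ‖r‖ < 1) (k : ℤ) :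
    ‖headSum r a k‖ ≤ D * (1 - ‖r‖)⁻¹ :=
  norm_tsum_mul_pow_le (fun j => by rw [Complex.norm_intCast]; exact hD _) hr

theorem tailSum_eq_inv_mul {β : ℝ} (hβ : β ≠ 0) (k : ℤ) :
    tailSum β a k = β⁻¹ * ∑' j : ℕ, (a (k + 1 + j) : ℝ) * β⁻¹ ^ j := by
  rw [tailSum, ← tsum_mul_left]
  congr 1 with j
  rw [zpow_sub₀ hβ, zpow_neg, zpow_natCast, zpow_one, inv_pow, add_right_comm]
  field_simp

theorem tailSum_sub_one {β : ℝ} (hβ : 1 < β) (hD : ∀ n, |(a n : ℝ)| ≤ D) (k : ℤ) :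
    tailSum β a (k - 1) = β⁻¹ * (a k + tailSum β a k) := by
  have hβ₀ : β ≠ 0 := by positivity
  have hr : ‖β⁻¹‖ < 1 := by
    rw [norm_inv, Real.norm_of_nonneg (by positivity)]
    exact inv_lt_one_of_one_lt₀ hβ
  rw [tailSum_eq_inv_mul hβ₀, tailSum_eq_inv_mul hβ₀, tsum_mul_pow_eq_add
    (summable_mul_pow_of_norm_le (D := D) (fun j => by rw [Real.norm_eq_abs]; exact hD _) hr)]
  simp only [sub_add_cancel, Nat.cast_zero, add_zero, Nat.cast_succ]
  congr 4 with j
  ring_nf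

end DigitSums

namespace AdmissibleSeq

variable {β : ℝ} {a : ℤ → ℤ}

theorem abs_le (ha : AdmissibleSeq β a) (n : ℤ) : |(a n : ℝ)| ≤ ⌈β⌉ := by
  obtain ⟨h₀, h₁⟩ := ha.1 n
  rw [abs_of_nonneg (by exact_mod_cast h₀)]
  exact_mod_cast h₁.trans (Int.sub_le_self _ zero_le_one)

theorem tailSum_lt_one (ha : AdmissibleSeq β a) (k : ℤ) : tailSum β a k < 1 := ha.2 k

theorem tailSum_nonneg (ha : AdmissibleSeq β a) (hβ : 0 < β) (k : ℤ) : 0 ≤ tailSum β a k :=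
  tsum_nonneg fun j => mul_nonneg (by exact_mod_cast (ha.1 _).1) (by positivity)

theorem floor_mul_tailSum_sub_one (ha : AdmissibleSeq β a) (hβ : 1 < β) (k : ℤ) :
    ⌊β * tailSum β a (k - 1)⌋ = a k := by
  rw [tailSum_sub_one hβ ha.abs_le, ← mul_assoc, mul_inv_cancel₀ (by positivity), one_mul,
    Int.floor_intCast_add, Int.floor_eq_zero_iff.2 ⟨ha.tailSum_nonneg (by positivity) k,
    ha.tailSum_lt_one k⟩, add_zero]

theorem abs_mul_inv_pow_sub_tailSum_le (ha : AdmissibleSeq β a) (hβ : 1 < β) (x₀ : ℝ) (m : ℕ) :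
    |x₀ * β⁻¹ ^ m - tailSum β a (-m)| ≤ |x₀| + 1 := by
  have hpow : |β⁻¹ ^ m| ≤ 1 := by
    rw [abs_of_nonneg (by positivity)]
    exact pow_le_one₀ (by positivity) (inv_le_one_of_one_le₀ hβ.le)
  have htail : |tailSum β a (-m)| ≤ 1 := by
    rw [abs_of_nonneg (ha.tailSum_nonneg (by positivity) _)]
    exact (ha.tailSum_lt_one _).le
  calc |x₀ * β⁻¹ ^ m - tailSum β a (-m)| ≤ |x₀| * |β⁻¹ ^ m| + |tailSum β a (-m)| := by
        rw [← abs_mul]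
        exact abs_sub _ _
    _ ≤ |x₀| * 1 + 1 := by gcongr
    _ = |x₀| + 1 := by ring

end AdmissibleSeq

def remainderSeq {K : Type*} [Field K] (g : K) (a : ℤ → ℤ) (w₀ : K) : ℕ → K
  | 0 => w₀
  | m + 1 => (remainderSeq g a w₀ m - a (-m)) * g⁻¹

section Remainder

variable {K : Type*} [Field K] {g : K} {a : ℤ → ℤ} {w₀ : K}

theorem remainderSeq_eq_mul_add (hg : g ≠ 0) (m : ℕ) :
    remainderSeq g a w₀ m = remainderSeq g a w₀ (m + 1) * g + a (-m) := by
  simp [remainderSeq, hg]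

theorem map_remainderSeq {L : Type*} [Field L] (φ : K →+* L) (hg : g ≠ 0) {u : ℕ → L}
    (h₀ : φ w₀ = u 0) (hu : ∀ m, u m = a (-m) + φ g * u (m + 1)) (m : ℕ) :
    φ (remainderSeq g a w₀ m) = u m := by
  induction m with
  | zero => exact h₀
  | succ m ih =>
    have hφg : φ g ≠ 0 := map_ne_zero_iff φ φ.injective |>.2 hg
    rw [remainderSeq, map_mul, map_sub, map_inv₀, map_intCast, ih, hu m]
    field_simp
    ring

theorem isIntegral_intCast_mul_remainderSeq {d : ℤ} (hg : IsIntegral ℤ g⁻¹)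
    (h₀ : IsIntegral ℤ (d * w₀)) (m : ℕ) : IsIntegral ℤ (d * remainderSeq g a w₀ m) := by
  induction m with
  | zero => exact h₀
  | succ m ih =>
    have hdig : IsIntegral ℤ ((d * a (-m) : ℤ) : K) := isIntegral_algebraMap
    rw [remainderSeq, ← mul_assoc, mul_sub, ← Int.cast_mul]
    exact (ih.sub hdig).mul hg

theorem digit_eq_of_remainderSeq_eq [CharZero K] (hg : g ≠ 0) {m n : ℕ}
    (h : remainderSeq g a w₀ m = remainderSeq g a w₀ n)
    (hsucc : remainderSeq g a w₀ (m + 1) = remainderSeq g a w₀ (n + 1)) : a (-m) = a (-n) := by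
  have := remainderSeq_eq_mul_add (a := a) (w₀ := w₀) hg m
  rw [h, remainderSeq_eq_mul_add hg n, hsucc, add_right_inj] at this
  exact_mod_cast this.symm

theorem map_remainderSeq_eq_headSum {D : ℝ} (φ : K →+* ℂ) (hg : g ≠ 0) (hr : ‖φ g‖ < 1)
    (hD : ∀ n, |(a n : ℝ)| ≤ D) (h₀ : φ w₀ = headSum (φ g) a 0) (m : ℕ) :
    φ (remainderSeq g a w₀ m) = headSum (φ g) a (-m) :=
  map_remainderSeq (a := a) (u := fun m => headSum (φ g) a (-m)) φ hg h₀
    (fun m => by rw [headSum_eq_add hD hr, Nat.cast_succ, neg_add']) m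

end Remainder

namespace NumberField

variable {K : Type*} [Field K] [NumberField K]

open ComplexEmbedding in
theorem ComplexEmbedding.eq_or_eq_or_eq_conjugate_of_finrank_eq_three
    (hK : Module.finrank ℚ K = 3) {τ σ : K →+* ℂ} (hτ : IsReal τ) (hσ : ¬IsReal σ)
    (φ : K →+* ℂ) : φ = τ ∨ φ = σ ∨ φ = conjugate σ := by
  classical
  have hτσ : τ ≠ σ := fun h => hσ (h ▸ hτ)
  have hσσ : σ ≠ conjugate σ := fun h => hσ (isReal_iff.2 h.symm)
  have hτσ' : τ ≠ conjugate σ := fun h => hσ (isReal_conjugate_iff.1 (h ▸ hτ))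
  have huniv : ({τ, σ, conjugate σ} : Finset (K →+* ℂ)) = Finset.univ := by
    refine Finset.eq_univ_of_card _ ?_
    rw [Embeddings.card, hK, Finset.card_insert_of_notMem (by simp [hτσ, hτσ']),
      Finset.card_pair hσσ]
  simpa [← huniv] using Finset.mem_univ φ

open ComplexEmbedding in
theorem ComplexEmbedding.norm_apply_le_max_of_finrank_eq_three (hK : Module.finrank ℚ K = 3)
    {τ σ : K →+* ℂ} (hτ : IsReal τ) (hσ : ¬IsReal σ) (φ : K →+* ℂ) (z : K) :
    ‖φ z‖ ≤ max ‖τ z‖ ‖σ z‖ := by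
  rcases eq_or_eq_or_eq_conjugate_of_finrank_eq_three hK hτ hσ φ with rfl | rfl | rfl
  · exact le_max_left _ _
  · exact le_max_right _ _
  · rw [conjugate_coe_eq, Complex.norm_conj]
    exact le_max_right _ _

theorem exists_isIntegral_intCast_mul (x : K) : ∃ d : ℤ, d ≠ 0 ∧ IsIntegral ℤ (d * x) := by
  obtain ⟨d, h⟩ := (IsIntegral.of_finite ℚ x).exists_multiple_integral_of_isLocalization
    (nonZeroDivisors ℤ)
  exact ⟨d, nonZeroDivisors.coe_ne_zero d, by rwa [Submonoid.smul_def, zsmul_eq_mul] at h⟩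

theorem finite_of_isIntegral_intCast_mul_of_norm_le {d : ℤ} (hd : d ≠ 0) (r : ℝ) :
    {x : K | IsIntegral ℤ (d * x) ∧ ∀ φ : K →+* ℂ, ‖φ x‖ ≤ r}.Finite := by
  refine ((Embeddings.finite_of_norm_le K ℂ (|(d : ℝ)| * r)).image
    fun z => (d : K)⁻¹ * z).subset ?_
  rintro x ⟨hint, hx⟩
  refine ⟨d * x, ⟨hint, fun φ => ?_⟩, by field_simp⟩
  rw [map_mul, norm_mul, map_intCast, Complex.norm_intCast]
  exact mul_le_mul_of_nonneg_left (hx φ) (abs_nonneg _)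

theorem finite_range_remainderSeq {g : K} (hg : IsIntegral ℤ g⁻¹) (a : ℤ → ℤ) (w₀ : K) {B : ℝ}
    (hB : ∀ (φ : K →+* ℂ) m, ‖φ (remainderSeq g a w₀ m)‖ ≤ B) :
    (Set.range (remainderSeq g a w₀)).Finite := by
  obtain ⟨d, hd, hint⟩ := exists_isIntegral_intCast_mul w₀
  refine (finite_of_isIntegral_intCast_mul_of_norm_le hd B).subset ?_
  rintro _ ⟨m, rfl⟩
  exact ⟨isIntegral_intCast_mul_remainderSeq hg hint m, fun φ => hB φ m⟩

end NumberField

section Qbeta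

variable {β : ℝ} {a : ℤ → ℤ}

theorem genβ_ne_zero (hβ : β ≠ 0) : genβ β ≠ 0 :=
  fun h => hβ (congrArg Subtype.val h)

theorem isIntegral_genβ_inv (hβ : IsIntegral ℤ β⁻¹) : IsIntegral ℤ (genβ β)⁻¹ :=
  (isIntegral_algebraMap_iff (algebraMap (Qbeta β) ℝ).injective).1 <| by
    rwa [map_inv₀]

theorem aeval_apply_genβ (φ : Qbeta β →+* ℂ) : aeval (φ (genβ β)) (minpoly ℚ β) = 0 := by
  have h : aeval (genβ β) (minpoly ℚ β) = 0 := by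
    rw [← show minpoly ℚ (genβ β) = minpoly ℚ β from IntermediateField.minpoly_eq _]
    exact minpoly.aeval ℚ (genβ β)
  rw [show φ (genβ β) = φ.toRatAlgHom (genβ β) from rfl, Polynomial.aeval_algHom_apply, h,
    map_zero]

open NumberField.ComplexEmbedding in
theorem norm_apply_le_max_of_natDegree_eq_three [NumberField (Qbeta β)] (hβ : IsIntegral ℚ β)
    (hdeg : (minpoly ℚ β).natDegree = 3) {σ : Qbeta β →+* ℂ} (hσ : (σ (genβ β)).im ≠ 0)
    (φ : Qbeta β →+* ℂ) (z : Qbeta β) : ‖φ z‖ ≤ max |(z : ℝ)| ‖σ z‖ := by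
  have hτ : IsReal (Complex.ofRealHom.comp (algebraMap (Qbeta β) ℝ)) :=
    (isReal_iff (φ := Complex.ofRealHom).2 (RingHom.ext Complex.conj_ofReal)).comp _
  have hσ' : ¬IsReal σ := fun h => hσ (Complex.conj_eq_iff_im.1 (RingHom.congr_fun h (genβ β)))
  have hK : Module.finrank ℚ (Qbeta β) = 3 := (IntermediateField.adjoin.finrank hβ).trans hdeg
  simpa using norm_apply_le_max_of_finrank_eq_three hK hτ hσ' φ z

theorem XiRep.tailSum_headSum {σ : Qbeta β →+* ℂ} {z : ℂ} (h : XiRep β σ z a) :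
    AdmissibleSeq β a ∧
      ∃ y : Qbeta β, (y : ℝ) = tailSum β a 0 ∧ z = headSum (σ (genβ β)) a 0 + σ y := by
  obtain ⟨ha, y, -, hy, hz⟩ := h
  exact ⟨ha, y, by simpa [tailSum] using hy, by simpa [headSum] using hz⟩

theorem coe_remainderSeq (hβ : 1 < β) (ha : AdmissibleSeq β a) {w₀ : Qbeta β} {x₀ : ℝ}
    (h₀ : (w₀ : ℝ) = x₀ - tailSum β a 0) (m : ℕ) :
    ((remainderSeq (genβ β) a w₀ m : Qbeta β) : ℝ) = x₀ * β⁻¹ ^ m - tailSum β a (-m) := by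
  refine map_remainderSeq (a := a) (u := fun m => x₀ * β⁻¹ ^ m - tailSum β a (-m))
    (algebraMap (Qbeta β) ℝ) (genβ_ne_zero (by positivity)) (by simpa using h₀) (fun m => ?_) m
  rw [show algebraMap (Qbeta β) ℝ (genβ β) = β from rfl, Nat.cast_succ, neg_add',
    tailSum_sub_one hβ ha.abs_le, pow_succ]
  field_simp
  ring

theorem exists_eventually_remainderSeq_eq_apply_succ (hβ : 1 < β) (ha : AdmissibleSeq β a)
    {w₀ : Qbeta β} {x₀ : ℝ}
    (hreal : ∀ m, ((remainderSeq (genβ β) a w₀ m : Qbeta β) : ℝ) = x₀ * β⁻¹ ^ m - tailSum β a (-m))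
    (hfin : (Set.range (remainderSeq (genβ β) a w₀)).Finite) :
    ∃ F : Qbeta β → Qbeta β, ∃ M, ∀ m, M ≤ m →
      remainderSeq (genβ β) a w₀ m = F (remainderSeq (genβ β) a w₀ (m + 1)) := by
  set W := remainderSeq (genβ β) a w₀
  have hdigit : ∀ m : ℕ, a (-m) = ⌊-β * W (m + 1) + x₀ * β⁻¹ ^ m⌋ := fun m => by
    have htail : tailSum β a (-m - 1) = x₀ * β⁻¹ ^ (m + 1) - W (m + 1) := by
      rw [hreal (m + 1), Nat.cast_succ, neg_add', sub_sub_cancel]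
    rw [← ha.floor_mul_tailSum_sub_one hβ (-m), htail, pow_succ]
    congr 1
    field_simp
    ring
  have hS : (Set.range fun m => -β * W (m + 1)).Finite :=
    (hfin.image fun v : Qbeta β => -β * v).subset
      (Set.range_subset_iff.2 fun m => ⟨_, ⟨m + 1, rfl⟩, rfl⟩)
  have ht : Tendsto (fun m : ℕ => x₀ * β⁻¹ ^ m) atTop (𝓝 0) := by
    simpa using (tendsto_pow_atTop_nhds_zero_of_lt_one (by positivity)
      (inv_lt_one_of_one_lt₀ hβ)).const_mul x₀
  have hsign : (∀ m : ℕ, 0 ≤ x₀ * β⁻¹ ^ m) ∨ ∀ m : ℕ, x₀ * β⁻¹ ^ m < 0 := by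
    rcases le_or_gt 0 x₀ with hx | hx
    · exact .inl fun m => by positivity
    · exact .inr fun m => mul_neg_of_neg_of_pos hx (by positivity)
  obtain ⟨f, hf⟩ := exists_eventually_floor_add_eq hS ht hsign
  obtain ⟨M, hM⟩ := eventually_atTop.1 hf
  refine ⟨fun v => v * genβ β + (f (-β * v) : Qbeta β), M, fun m hm =>
    (remainderSeq_eq_mul_add (genβ_ne_zero (by positivity)) m).trans ?_⟩
  rw [hdigit m, hM m hm _ ⟨m, rfl⟩]

end Qbeta

theorem statement11_general (β : ℝ) (hpu : IsPisotUnit β)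
    (hdeg : (minpoly ℚ β).natDegree = 3)
    (σ : Qbeta β →+* ℂ) (hσ : (σ (genβ β)).im ≠ 0)
    (x : Qbeta β) (a : ℤ → ℤ) (ha : XiRep β σ (σ x) a) :
    ∃ p : ℕ, 1 ≤ p ∧ ∃ N : ℕ, ∀ n : ℕ, N ≤ n →
      a (-(n : ℤ) - (p : ℤ)) = a (-(n : ℤ)) := by
  obtain ⟨⟨hβ, hβint, hconj⟩, hβinv⟩ := hpu
  obtain ⟨hadm, y, hy, hσx⟩ := ha.tailSum_headSum
  have hβQ : IsIntegral ℚ β := hβint.tower_top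
  have : FiniteDimensional ℚ (Qbeta β) := IntermediateField.adjoin.finiteDimensional hβQ
  have : NumberField (Qbeta β) := ⟨⟩
  have hr : ‖σ (genβ β)‖ < 1 :=
    hconj _ (aeval_apply_genβ σ) fun h => hσ (by rw [h, Complex.ofReal_im])
  have hg : genβ β ≠ 0 := genβ_ne_zero (by positivity)
  set W := remainderSeq (genβ β) a (x - y)
  have hreal := coe_remainderSeq hβ hadm (w₀ := x - y) (x₀ := x) (by push_cast; rw [hy])
  have hσW := map_remainderSeq_eq_headSum σ hg hr hadm.abs_le (w₀ := x - y)
    (by rw [map_sub, hσx, add_sub_cancel_right])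
  have hbound (φ : Qbeta β →+* ℂ) (m : ℕ) :
      ‖φ (W m)‖ ≤ max (|(x : ℝ)| + 1) (⌈β⌉ * (1 - ‖σ (genβ β)‖)⁻¹) :=
    (norm_apply_le_max_of_natDegree_eq_three hβQ hdeg hσ φ (W m)).trans <| max_le_max
      (hreal m ▸ hadm.abs_mul_inv_pow_sub_tailSum_le hβ x m)
      (hσW m ▸ norm_headSum_le hadm.abs_le hr _)
  have hfin := NumberField.finite_range_remainderSeq (isIntegral_genβ_inv hβinv) a (x - y) hbound
  obtain ⟨F, M, hF⟩ := exists_eventually_remainderSeq_eq_apply_succ hβ hadm hreal hfin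
  obtain ⟨p, hp, N, hN⟩ := Function.exists_eventually_periodic_of_eq_apply_succ hfin F M hF
  refine ⟨p, hp, N, fun n hn => ?_⟩
  have := digit_eq_of_remainderSeq_eq hg (hN n hn)
    (by rw [add_right_comm]; exact hN (n + 1) (by omega))
  rwa [Nat.cast_add, neg_add'] at this

theorem statement11 (β : ℝ) (hpu : IsPisotUnit β)
    (hdeg : (minpoly ℚ β).natDegree = 3) (hnr : NonRealConjugates β)
    (σ : Qbeta β →+* ℂ) (hσ : (σ (genβ β)).im ≠ 0)
    (x : Qbeta β) (a : ℤ → ℤ) (ha : XiRep β σ (σ x) a) :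
    ∃ p : ℕ, 1 ≤ p ∧ ∃ N : ℕ, ∀ n : ℕ, N ≤ n →
      a (-(n : ℤ) - (p : ℤ)) = a (-(n : ℤ)) :=
  statement11_general β hpu hdeg σ hσ x a ha
end
end

section
/- Let β be a cubic Pisot unit with non-real Galois conjugates and let σ : ℚ(β) → ℂ be a field embedding with σ(β) ∉ ℝ. Then there exists a positive integer C such that every z ∈ ℂ belongs to the tile 𝒯(y) for at most C distinct values of y ∈ ℤ[β, β⁻¹] ∩ [0,1). -/
/-!
Every tile `𝒯(y)` lies in the closed disc of radius `R = (⌈β⌉ - 1) / (1 - |σ(β)|)` around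
`σ(y)`, because `σ(β)` is a conjugate of modulus `< 1`. If `z` lies in `𝒯(y)` and `𝒯(y')`, then
`y - y'` is an algebraic integer with `|y - y'| < 1` and `|σ(y - y')| ≤ 2R`. As `β` is cubic, the
embeddings of `ℚ(β)` into `ℂ` are the real one, `σ` and `σ̄`, so all conjugates of `y - y'` are
bounded, which leaves finitely many possible differences.
-/

open Polynomial

noncomputable section

/-- The `n`-th digit (starting from `n = 0` for the digit `b₁`) of the β-expansion of `x`. -/
def betaDigit (β : ℝ) (x : ℝ) (n : ℕ) : ℤ := ⌊β * (betaT β)^[n] x⌋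

/-- The bi-infinite digit sequence `(…, 0, 0, a_{-k+1}, …, a_0, b_1, b_2, …)` obtained by
prepending the finite word `w = (a_{-k+1}, …, a_0)` (and then zeros) to the β-expansion
digits of `y`. -/
def extSeq (β : ℝ) (y : ℝ) (w : List ℤ) : ℤ → ℤ := fun n =>
  if 1 ≤ n then betaDigit β y (n - 1).toNat
  else if -(w.length : ℤ) < n then w.getD (n + w.length - 1).toNat 0
  else 0

/-- The finite word `w = (a_{-k+1}, …, a_0)` is compatible with `y`. -/
def Compatible (β : ℝ) (y : ℝ) (w : List ℤ) : Prop :=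
  AdmissibleSeq β (extSeq β y w)

/-- The value `a_{-k+1} β^{k-1} + ⋯ + a_{-1} β + a_0` of a finite digit word. -/
def wordValue (β : ℝ) : List ℤ → ℝ
  | [] => 0
  | d :: rest => (d : ℝ) * β ^ rest.length + wordValue β rest

/-- The tile `𝒯(y)` associated with `y ∈ ℤ[β, β⁻¹] ∩ [0,1)`. -/
def tile (β : ℝ) (σ : Qbeta β →+* ℂ) (y : Qbeta β) : Set ℂ :=
  (fun z => σ y + z) ''
    closure {z | ∃ w : List ℤ, Compatible β (y : ℝ) w ∧
      ∃ x : Qbeta β, (x : ℝ) = wordValue β w ∧ z = σ x}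

section WordEval

variable {R : Type*} [Ring R]

/-- `wordValue` over an arbitrary ring, so that it can be transported along `σ`. -/
def wordEval (c : R) : List ℤ → R
  | [] => 0
  | d :: rest => d * c ^ rest.length + wordEval c rest

lemma map_wordEval {S : Type*} [Ring S] (f : R →+* S) (c : R) (w : List ℤ) :
    f (wordEval c w) = wordEval (f c) w := by
  induction w with
  | nil => simp [wordEval]
  | cons d rest ih => simp [wordEval, ih]

lemma wordEval_eq_wordValue (β : ℝ) (w : List ℤ) : wordEval β w = wordValue β w := by
  induction w with
  | nil => rfl
  | cons d rest ih => simp [wordEval, wordValue, ih]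

end WordEval

lemma norm_wordEval_le_geom {c : ℂ} (hc : ‖c‖ < 1) {D : ℝ} (w : List ℤ)
    (hw : ∀ d ∈ w, 0 ≤ d ∧ (d : ℝ) ≤ D) :
    ‖wordEval c w‖ ≤ D * (1 - ‖c‖ ^ w.length) / (1 - ‖c‖) := by
  induction w with
  | nil => simp [wordEval]
  | cons d rest ih =>
    obtain ⟨hd0, hdD⟩ := hw d List.mem_cons_self
    have hrest := ih fun x hx => hw x (List.mem_cons_of_mem d hx)
    have hdigit : ‖(d : ℂ) * c ^ rest.length‖ ≤ D * ‖c‖ ^ rest.length := by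
      rw [norm_mul, norm_pow, Complex.norm_intCast, abs_of_nonneg (Int.cast_nonneg hd0)]
      gcongr
    have h1c : 1 - ‖c‖ ≠ 0 := by linarith
    calc ‖wordEval c (d :: rest)‖
        ≤ D * ‖c‖ ^ rest.length + D * (1 - ‖c‖ ^ rest.length) / (1 - ‖c‖) :=
          (norm_add_le _ _).trans (add_le_add hdigit hrest)
      _ = D * (1 - ‖c‖ ^ (d :: rest).length) / (1 - ‖c‖) := by
          rw [List.length_cons]; field_simp; ring

lemma norm_wordEval_le {c : ℂ} (hc : ‖c‖ < 1) {D : ℝ} (hD : 0 ≤ D) (w : List ℤ)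
    (hw : ∀ d ∈ w, 0 ≤ d ∧ (d : ℝ) ≤ D) : ‖wordEval c w‖ ≤ D / (1 - ‖c‖) := by
  refine (norm_wordEval_le_geom hc w hw).trans (div_le_div_of_nonneg_right ?_ (by linarith))
  exact mul_le_of_le_one_right hD (by linarith [pow_nonneg (norm_nonneg c) w.length])

lemma Compatible.digit_mem {β y : ℝ} {w : List ℤ} (h : Compatible β y w) {d : ℤ} (hd : d ∈ w) :
    0 ≤ d ∧ d ≤ ⌈β⌉ - 1 := by
  obtain ⟨⟨j, hj⟩, rfl⟩ := List.mem_iff_get.mp hd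
  have hpos : extSeq β y w ((j : ℤ) + 1 - w.length) = w.get ⟨j, hj⟩ := by
    rw [extSeq, if_neg (by omega), if_pos (by omega),
      show ((j : ℤ) + 1 - w.length + w.length - 1).toNat = j by omega]
    simp [List.getD_eq_getElem?_getD, List.getElem?_eq_getElem hj]
  exact hpos ▸ h.1 _

lemma tile_subset_closedBall {β : ℝ} (hβ : 0 < β) (σ : Qbeta β →+* ℂ)
    (hσ : ‖σ (genβ β)‖ < 1) (y : Qbeta β) :
    tile β σ y ⊆ Metric.closedBall (σ y) ((⌈β⌉ - 1) / (1 - ‖σ (genβ β)‖)) := by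
  have hD : (0 : ℝ) ≤ ⌈β⌉ - 1 := by
    have : (1 : ℝ) ≤ ⌈β⌉ := by exact_mod_cast Int.one_le_ceil_iff.2 hβ
    linarith
  have hwords : {z | ∃ w : List ℤ, Compatible β (y : ℝ) w ∧
      ∃ x : Qbeta β, (x : ℝ) = wordValue β w ∧ z = σ x} ⊆
      Metric.closedBall 0 ((⌈β⌉ - 1) / (1 - ‖σ (genβ β)‖)) := by
    rintro _ ⟨w, hw, x, hx, rfl⟩
    have hxw : x = wordEval (genβ β) w := Subtype.coe_injective <| by
      change (x : ℝ) = _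
      rw [hx, ← wordEval_eq_wordValue]
      exact (map_wordEval (algebraMap (Qbeta β) ℝ) (genβ β) w).symm
    rw [mem_closedBall_zero_iff, hxw, map_wordEval]
    refine norm_wordEval_le hσ hD w fun d hd => ?_
    obtain ⟨h0, h1⟩ := hw.digit_mem hd
    exact ⟨h0, by exact_mod_cast h1⟩
  rintro _ ⟨u, hu, rfl⟩
  have := closure_minimal hwords Metric.isClosed_closedBall hu
  rw [mem_closedBall_zero_iff] at this
  rwa [Metric.mem_closedBall, dist_self_add_left]

lemma aeval_map_genβ_minpoly (β : ℝ) (φ : Qbeta β →+* ℂ) :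
    aeval (φ (genβ β)) (minpoly ℚ β) = 0 := by
  have hmin : minpoly ℚ (genβ β) = minpoly ℚ β :=
    (minpoly.algebraMap_eq (algebraMap (Qbeta β) ℝ).injective (genβ β)).symm
  rw [← φ.toRatAlgHom_apply, aeval_algHom_apply, ← hmin, minpoly.aeval, map_zero]

lemma ringHom_ext_genβ {β : ℝ} (hβ : IsIntegral ℚ β) {φ ψ : Qbeta β →+* ℂ}
    (h : φ (genβ β) = ψ (genβ β)) : φ = ψ :=
  congrArg AlgHom.toRingHom <| (IntermediateField.adjoin.powerBasis hβ).algHom_ext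
    (f := φ.toRatAlgHom) (g := ψ.toRatAlgHom) h

lemma eq_or_eq_or_eq_of_isRoot {p : ℂ[X]} (hp0 : p ≠ 0) (hp : p.natDegree ≤ 3) {a b c z : ℂ}
    (hab : a ≠ b) (hac : a ≠ c) (hbc : b ≠ c)
    (ha : p.IsRoot a) (hb : p.IsRoot b) (hc : p.IsRoot c) (hz : p.IsRoot z) :
    z = a ∨ z = b ∨ z = c := by
  classical
  by_contra! hne
  obtain ⟨hza, hzb, hzc⟩ := hne
  have hsub : ({z, a, b, c} : Finset ℂ).val ⊆ p.roots := by
    intro x hx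
    simp only [Finset.insert_val, Multiset.mem_ndinsert, Finset.mem_val,
      Finset.mem_singleton] at hx
    rw [mem_roots hp0]
    rcases hx with rfl | rfl | rfl | rfl <;> assumption
  have := card_le_degree_of_subset_roots hsub
  rw [Finset.card_insert_of_notMem (by simp [hza, hzb, hzc]),
    Finset.card_insert_of_notMem (by simp [hab, hac]), Finset.card_pair hbc] at this
  omega

lemma ringHom_eq_of_natDegree_eq_three {β : ℝ} (hβ : IsIntegral ℚ β)
    (hdeg : (minpoly ℚ β).natDegree = 3) {σ : Qbeta β →+* ℂ} (hσ : (σ (genβ β)).im ≠ 0)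
    (φ : Qbeta β →+* ℂ) :
    φ = Complex.ofRealHom.comp (algebraMap (Qbeta β) ℝ) ∨ φ = σ ∨
      φ = (starRingEnd ℂ).comp σ := by
  set ι := Complex.ofRealHom.comp (algebraMap (Qbeta β) ℝ)
  set p := (minpoly ℚ β).map (algebraMap ℚ ℂ)
  have hroot (ψ : Qbeta β →+* ℂ) : p.IsRoot (ψ (genβ β)) := by
    rw [IsRoot, eval_map_algebraMap, aeval_map_genβ_minpoly]
  have hι : ι (genβ β) = β := rfl
  have hσc : σ (genβ β) ≠ (starRingEnd ℂ) (σ (genβ β)) := fun h =>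
    hσ (Complex.conj_eq_iff_im.1 h.symm)
  have hισ : ι (genβ β) ≠ σ (genβ β) := fun h => hσ (by rw [← h, hι, Complex.ofReal_im])
  have hισc : ι (genβ β) ≠ (starRingEnd ℂ) (σ (genβ β)) := fun h =>
    hσ (by rw [← Complex.conj_conj (σ (genβ β)), ← h, hι, Complex.conj_ofReal,
      Complex.ofReal_im])
  rcases eq_or_eq_or_eq_of_isRoot (Polynomial.map_ne_zero (minpoly.ne_zero hβ))
    (natDegree_map_le.trans hdeg.le) hισ hισc hσc
    (hroot ι) (hroot σ) (hroot ((starRingEnd ℂ).comp σ)) (hroot φ) with h | h | h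
  exacts [.inl (ringHom_ext_genβ hβ h), .inr (.inl (ringHom_ext_genβ hβ h)),
    .inr (.inr (ringHom_ext_genβ hβ h))]

lemma norm_map_le_of_natDegree_eq_three {β : ℝ} (hβ : IsIntegral ℚ β)
    (hdeg : (minpoly ℚ β).natDegree = 3) {σ : Qbeta β →+* ℂ} (hσ : (σ (genβ β)).im ≠ 0)
    {x : Qbeta β} {B : ℝ} (hx : |(x : ℝ)| ≤ B) (hσx : ‖σ x‖ ≤ B) (φ : Qbeta β →+* ℂ) :
    ‖φ x‖ ≤ B := by
  rcases ringHom_eq_of_natDegree_eq_three hβ hdeg hσ φ with rfl | rfl | rfl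
  · exact (Complex.norm_real _).trans_le hx
  · exact hσx
  · exact (RCLike.norm_conj _).trans_le hσx

lemma norm_map_sub_le_of_mem_tile {β : ℝ} (hβ : 0 < β) {σ : Qbeta β →+* ℂ}
    (hσ : ‖σ (genβ β)‖ < 1) {y y' : Qbeta β} {z : ℂ} (hy : z ∈ tile β σ y)
    (hy' : z ∈ tile β σ y') :
    ‖σ (y - y')‖ ≤ 2 * ((⌈β⌉ - 1) / (1 - ‖σ (genβ β)‖)) := by
  have hzy := tile_subset_closedBall hβ σ hσ y hy
  have hzy' := tile_subset_closedBall hβ σ hσ y' hy'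
  rw [Metric.mem_closedBall] at hzy hzy'
  rw [map_sub, ← dist_eq_norm, two_mul]
  exact (dist_triangle_left _ _ z).trans (add_le_add hzy hzy')

lemma isIntegral_of_mem_subringClosure {A : Type*} [CommRing A] {s : Set A}
    (hs : ∀ x ∈ s, IsIntegral ℤ x) {x : A} (hx : x ∈ Subring.closure s) : IsIntegral ℤ x :=
  (Subring.closure_le (t := (integralClosure ℤ A).toSubring)).2 hs hx

lemma Set.finite_and_ncard_le_of_sub_mem {G : Type*} [AddGroup G] {A S : Set G}
    (hS : S.Finite) (h : ∀ a ∈ A, ∀ b ∈ A, a - b ∈ S) : A.Finite ∧ A.ncard ≤ S.ncard := by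
  rcases A.eq_empty_or_nonempty with rfl | ⟨b, hb⟩
  · simp
  have hA : A ⊆ (· + b) '' S := fun a ha => ⟨a - b, h a ha b hb, sub_add_cancel a b⟩
  have hfin := hS.image (· + b)
  exact ⟨hfin.subset hA, (Set.ncard_le_ncard hA hfin).trans (Set.ncard_image_le hS)⟩

theorem statement12_general (β : ℝ) (hpu : IsPisotUnit β)
    (hdeg : (minpoly ℚ β).natDegree = 3)
    (σ : Qbeta β →+* ℂ) (hσ : (σ (genβ β)).im ≠ 0) :
    ∃ C : ℕ, 0 < C ∧ ∀ z : ℂ,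
      {y : Qbeta β | (y : ℝ) ∈ Subring.closure ({β, β⁻¹} : Set ℝ) ∧
        (y : ℝ) ∈ Set.Ico (0 : ℝ) 1 ∧ z ∈ tile β σ y}.Finite ∧
      {y : Qbeta β | (y : ℝ) ∈ Subring.closure ({β, β⁻¹} : Set ℝ) ∧
        (y : ℝ) ∈ Set.Ico (0 : ℝ) 1 ∧ z ∈ tile β σ y}.ncard ≤ C := by
  obtain ⟨⟨hβ1, hβZ, hconj⟩, hβinvZ⟩ := hpu
  have hβQ : IsIntegral ℚ β := hβZ.tower_top
  have : FiniteDimensional ℚ (Qbeta β) := IntermediateField.adjoin.finiteDimensional hβQ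
  have : NumberField (Qbeta β) := ⟨⟩
  have hσβ : ‖σ (genβ β)‖ < 1 := hconj _ (aeval_map_genβ_minpoly β σ) fun h =>
    hσ (by rw [h, Complex.ofReal_im])
  set B := max 1 (2 * ((⌈β⌉ - 1) / (1 - ‖σ (genβ β)‖)))
  set S := {x : Qbeta β | IsIntegral ℤ x ∧ ∀ φ : Qbeta β →+* ℂ, ‖φ x‖ ≤ B}
  have hint (y : Qbeta β) (hy : (y : ℝ) ∈ Subring.closure ({β, β⁻¹} : Set ℝ)) :
      IsIntegral ℤ y :=
    (isIntegral_algebraMap_iff (algebraMap (Qbeta β) ℝ).injective).1 <|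
      isIntegral_of_mem_subringClosure (by rintro x (rfl | rfl); exacts [hβZ, hβinvZ]) hy
  refine ⟨S.ncard + 1, S.ncard.succ_pos, fun z => ?_⟩
  refine (Set.finite_and_ncard_le_of_sub_mem (NumberField.Embeddings.finite_of_norm_le _ ℂ B)
    ?_).imp_right fun h => h.trans S.ncard.le_succ
  rintro y ⟨hyZ, ⟨hy0, hy1⟩, hyz⟩ y' ⟨hy'Z, ⟨hy'0, hy'1⟩, hy'z⟩
  refine ⟨(hint y hyZ).sub (hint y' hy'Z), norm_map_le_of_natDegree_eq_three hβQ hdeg hσ ?_ ?_⟩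
  · exact (abs_sub_lt_of_nonneg_of_lt hy0 hy1 hy'0 hy'1).le.trans (le_max_left _ _)
  · exact (norm_map_sub_le_of_mem_tile (by linarith) hσβ hyz hy'z).trans (le_max_right _ _)

theorem statement12 (β : ℝ) (hpu : IsPisotUnit β)
    (hdeg : (minpoly ℚ β).natDegree = 3) (hnr : NonRealConjugates β)
    (σ : Qbeta β →+* ℂ) (hσ : (σ (genβ β)).im ≠ 0) :
    ∃ C : ℕ, 0 < C ∧ ∀ z : ℂ,
      {y : Qbeta β | (y : ℝ) ∈ Subring.closure ({β, β⁻¹} : Set ℝ) ∧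
        (y : ℝ) ∈ Set.Ico (0 : ℝ) 1 ∧ z ∈ tile β σ y}.Finite ∧
      {y : Qbeta β | (y : ℝ) ∈ Subring.closure ({β, β⁻¹} : Set ℝ) ∧
        (y : ℝ) ∈ Set.Ico (0 : ℝ) 1 ∧ z ∈ tile β σ y}.ncard ≤ C :=
  statement12_general β hpu hdeg σ hσ

end
end

section
/- Let β > 1 be a real number with γ(β) > 0. Then β is an algebraic integer and β⁻¹ is an algebraic integer; that is, β is a unit of the ring of integers of the number field it generates. -/
open Polynomial

/-!
If `1/q` is purely periodic with period `p`, iterating `T_β` gives `β^p/q - D(β) = 1/q` for an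
integer polynomial `D` of degree `< p`, so `β` is a root of the monic polynomial `X^p - qD - 1`,
whose constant coefficient is `≡ -1 mod q`. Since `γ(β) > 0`, this holds for every large `q`.
Hence `β` is an algebraic integer, and the constant coefficient `c₀` of its minimal polynomial,
which divides that of every such polynomial, divides an integer `≡ -1 mod q` for all large `q`.
Taking `q` a multiple of `c₀` gives `c₀ = ±1`, and then `β⁻¹` is a polynomial in `β`.
-/

open Filter

theorem betaT_iterate_eq_sub_aeval (β x : ℝ) (n : ℕ) :
    ∃ D : ℤ[X], D.degree < n ∧ (betaT β)^[n] x = β ^ n * x - aeval β D := by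
  induction n with
  | zero => exact ⟨0, by simp⟩
  | succ n ih =>
    obtain ⟨D, hD, hTn⟩ := ih
    refine ⟨D * X + C ⌊β * (betaT β)^[n] x⌋, ?_, ?_⟩
    · refine (degree_add_le _ _).trans_lt (max_lt ?_ ?_)
      · rw [degree_mul_X]
        push_cast
        exact WithBot.add_lt_add_right (by simp) hD
      · exact degree_C_le.trans_lt (by exact_mod_cast n.succ_pos)
    · rw [Function.iterate_succ_apply', betaT, hTn]
      simp only [map_add, map_mul, aeval_X, eq_intCast, map_intCast]
      ring

theorem exists_monic_of_purelyPeriodic_inv_natCast {β : ℝ} {q : ℕ} (hq : q ≠ 0)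
    (h : PurelyPeriodic β (q : ℝ)⁻¹) :
    ∃ P : ℤ[X], P.Monic ∧ aeval β P = 0 ∧ (q : ℤ) ∣ P.coeff 0 + 1 := by
  obtain ⟨p, hp, hper⟩ := h
  obtain ⟨D, hD, hTp⟩ := betaT_iterate_eq_sub_aeval β (q : ℝ)⁻¹ p
  refine ⟨X ^ p - (C (q : ℤ) * D + 1), monic_X_pow_sub ?_, ?_, ⟨-D.coeff 0, ?_⟩⟩
  · refine (degree_add_le _ _).trans_lt (max_lt ?_ ?_)
    · rwa [degree_C_mul (by exact_mod_cast hq)]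
    · exact degree_one_le.trans_lt (by exact_mod_cast hp)
  · rw [hper] at hTp
    field_simp at hTp
    simp only [map_natCast, aeval_sub, map_pow, aeval_X, map_add, map_mul, map_one]
    linarith
  · simp [coeff_X_pow, (Nat.one_le_iff_ne_zero.mp hp).symm]

theorem isIntegral_inv_of_aeval_eq_zero {R K : Type*} [CommRing R] [Field K] [Algebra R K]
    {x : K} {P : R[X]} (hx : IsIntegral R x) (hP : aeval x P = 0) (hu : IsUnit (P.coeff 0)) :
    IsIntegral R x⁻¹ := by
  have hsplit : x * aeval x P.divX + algebraMap R K (P.coeff 0) = 0 := by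
    have := congrArg (aeval x) (X_mul_divX_add P)
    rwa [hP, map_add, map_mul, aeval_X, aeval_C] at this
  have hinv : x⁻¹ = -aeval x P.divX * algebraMap R K ↑hu.unit⁻¹ := by
    refine inv_eq_of_mul_eq_one_right ?_
    rw [← mul_assoc, mul_neg, eq_neg_of_add_eq_zero_left hsplit, neg_neg, ← map_mul,
      IsUnit.mul_val_inv, map_one]
  rw [hinv]
  exact ((IsIntegral.of_mem_of_fg _ hx.fg_adjoin_singleton _
    (aeval_mem_adjoin_singleton R x)).neg).mul isIntegral_algebraMap

theorem Int.isUnit_of_eventually_exists_dvd_add_one {c : ℤ}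
    (h : ∀ᶠ q : ℕ in atTop, ∃ a : ℤ, c ∣ a ∧ (q : ℤ) ∣ a + 1) : IsUnit c := by
  obtain ⟨N, h⟩ := eventually_atTop.mp h
  have hc : c ≠ 0 := by
    rintro rfl
    obtain ⟨a, ha, hqa⟩ := h (N + 2) (by omega)
    rw [zero_dvd_iff.mp ha, zero_add] at hqa
    have := Int.le_of_dvd one_pos hqa
    omega
  obtain ⟨a, ha, hqa⟩ := h ((N + 1) * c.natAbs) (by nlinarith [Int.natAbs_pos.mpr hc])
  have hcq : c ∣ ((N + 1) * c.natAbs : ℕ) := by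
    rw [Nat.cast_mul]
    exact (Int.dvd_natCast.mpr dvd_rfl).mul_left _
  exact isUnit_of_dvd_one ((dvd_add_right ha).mp (hcq.trans hqa))

theorem eventually_purelyPeriodic_inv_natCast {β : ℝ} (h : 0 < gamma β) :
    ∀ᶠ q : ℕ in atTop, PurelyPeriodic β (q : ℝ)⁻¹ := by
  have hne : Set.Nonempty {c | c ∈ Set.Ico (0 : ℝ) 1 ∧
      ∀ r : ℚ, 0 ≤ (r : ℝ) → (r : ℝ) ≤ c → PurelyPeriodic β (r : ℝ)} := by
    refine Set.nonempty_iff_ne_empty.mpr fun hempty ↦ ?_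
    rw [gamma, hempty, Real.sSup_empty] at h
    exact h.false
  obtain ⟨c, ⟨-, hc⟩, hc0⟩ := exists_lt_of_lt_csSup hne h
  filter_upwards [eventually_gt_atTop ⌈c⁻¹⌉₊] with q hq
  have hq' : c⁻¹ < q := (Nat.le_ceil _).trans_lt (by exact_mod_cast hq)
  simpa using hc (q : ℚ)⁻¹ (by positivity) (by push_cast; exact inv_le_of_inv_le₀ hc0 hq'.le)

theorem statement14_general (β : ℝ) (h : 0 < gamma β) :
    IsIntegral ℤ β ∧ IsIntegral ℤ β⁻¹ := by
  have hpoly : ∀ᶠ q : ℕ in atTop,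
      ∃ P : ℤ[X], P.Monic ∧ aeval β P = 0 ∧ (q : ℤ) ∣ P.coeff 0 + 1 := by
    filter_upwards [eventually_purelyPeriodic_inv_natCast h, eventually_ne_atTop 0]
      with q hq hq0
    exact exists_monic_of_purelyPeriodic_inv_natCast hq0 hq
  obtain ⟨-, P, hPmonic, hPβ, -⟩ := hpoly.exists
  have hβ : IsIntegral ℤ β := ⟨P, hPmonic, hPβ⟩
  refine ⟨hβ, isIntegral_inv_of_aeval_eq_zero hβ (minpoly.aeval ℤ β)
    (Int.isUnit_of_eventually_exists_dvd_add_one ?_)⟩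
  filter_upwards [hpoly] with q hq
  obtain ⟨P, -, hPβ, hqP⟩ := hq
  refine ⟨P.coeff 0, ?_, hqP⟩
  simpa using map_dvd constantCoeff (minpoly.isIntegrallyClosed_dvd hβ hPβ)

theorem statement14 (β : ℝ) (hβ : 1 < β) (h : 0 < gamma β) :
    IsIntegral ℤ β ∧ IsIntegral ℤ β⁻¹ :=
  statement14_general β h
end

section
/- Let β be a cubic Pisot unit with non-real Galois conjugates and let σ : ℚ(β) → ℂ be a field embedding with σ(β) ∉ ℝ. Then the central tile 𝒯 is a compact subset of ℂ. -/
/-!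
A β-integer `x` is `β^k y` with `T_β^k y = 0`, so unrolling the β-transformation writes it as
`x = ∑ dᵢ βⁱ` with digits `dᵢ = ⌊β T_β^j y⌋ ∈ [0, β]`, hence `σ x = ∑ dᵢ σ(β)ⁱ`. Since `σ(β) ≠ β`
is a root of the minimal polynomial of the Pisot number `β`, `‖σ(β)‖ < 1`, and the geometric
series bounds `‖σ x‖` by `β / (1 - ‖σ(β)‖)`. The central tile is thus a closed bounded set.
-/

open Polynomial

noncomputable section

open Finset

lemma betaT_iterate_mem_Ico (β : ℝ) {y : ℝ} (hy : y ∈ Set.Ico (0 : ℝ) 1) (n : ℕ) :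
    (betaT β)^[n] y ∈ Set.Ico (0 : ℝ) 1 := by
  induction n generalizing y with
  | zero => exact hy
  | succ n ih =>
    rw [Function.iterate_succ_apply]
    exact ih ⟨Int.fract_nonneg _, Int.fract_lt_one _⟩

lemma pow_mul_eq_sum_floor_add_betaT_iterate (β : ℝ) (k : ℕ) (y : ℝ) :
    β ^ k * y = ∑ i ∈ range k, (⌊β * (betaT β)^[i] y⌋ : ℝ) * β ^ (k - 1 - i)
      + (betaT β)^[k] y := by
  induction k generalizing y with
  | zero => simp
  | succ k ih =>
    have hstep : β ^ (k + 1) * y = β ^ k * betaT β y + ⌊β * y⌋ * β ^ k := by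
      rw [betaT]; ring
    rw [hstep, ih, sum_range_succ' _ k, add_right_comm, Function.iterate_succ_apply]
    congr 2
    refine sum_congr rfl fun i _ => ?_
    rw [Function.iterate_succ_apply, show k + 1 - 1 - (i + 1) = k - 1 - i by omega]

lemma floor_mul_nonneg_and_le_of_mem_Ico {β : ℝ} (hβ : 0 < β) {y : ℝ} (hy : y ∈ Set.Ico (0 : ℝ) 1) :
    0 ≤ ⌊β * y⌋ ∧ (⌊β * y⌋ : ℝ) ≤ β := by
  refine ⟨Int.floor_nonneg.2 (mul_nonneg hβ.le hy.1), ?_⟩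
  calc (⌊β * y⌋ : ℝ) ≤ β * y := Int.floor_le _
    _ ≤ β := mul_le_of_le_one_right hβ.le hy.2.le

lemma exists_digits_of_mem_intBeta {β : ℝ} (hβ : 0 < β) {x : ℝ} (hx : x ∈ IntBeta β) :
    ∃ (k : ℕ) (d : ℕ → ℤ), (∀ i, 0 ≤ d i ∧ (d i : ℝ) ≤ β) ∧
      x = ∑ i ∈ range k, (d i : ℝ) * β ^ i := by
  obtain ⟨-, k, hy, hfin⟩ := hx
  set y := β ^ (-(k : ℤ)) * x
  have hxy : x = β ^ k * y := by
    rw [← mul_assoc, ← zpow_natCast, ← zpow_add₀ hβ.ne', add_neg_cancel, zpow_zero, one_mul]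
  refine ⟨k, fun i => ⌊β * (betaT β)^[k - 1 - i] y⌋,
    fun i => floor_mul_nonneg_and_le_of_mem_Ico hβ (betaT_iterate_mem_Ico β hy _), ?_⟩
  rw [hxy, pow_mul_eq_sum_floor_add_betaT_iterate, hfin, add_zero,
    ← sum_range_reflect]
  refine sum_congr rfl fun i hi => ?_
  rw [show k - 1 - (k - 1 - i) = i by have := mem_range.1 hi; omega]

lemma norm_sum_mul_pow_le {𝕜 : Type*} [NormedDivisionRing 𝕜] {z : 𝕜} (hz : ‖z‖ < 1)
    {a : ℕ → 𝕜} {B : ℝ} (ha : ∀ i, ‖a i‖ ≤ B) (k : ℕ) :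
    ‖∑ i ∈ range k, a i * z ^ i‖ ≤ B / (1 - ‖z‖) := by
  have hB : 0 ≤ B := (norm_nonneg _).trans (ha 0)
  calc ‖∑ i ∈ range k, a i * z ^ i‖ ≤ ∑ i ∈ range k, B * ‖z‖ ^ i := by
        refine (norm_sum_le _ _).trans (sum_le_sum fun i _ => ?_)
        rw [norm_mul, norm_pow]
        exact mul_le_mul_of_nonneg_right (ha i) (by positivity)
    _ = B * ∑ i ∈ Ico 0 k, ‖z‖ ^ i := by rw [← mul_sum, range_eq_Ico]
    _ ≤ B * (‖z‖ ^ 0 / (1 - ‖z‖)) :=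
        mul_le_mul_of_nonneg_left (geom_sum_Ico_le_of_lt_one (norm_nonneg _) hz) hB
    _ = B / (1 - ‖z‖) := by rw [pow_zero, mul_one_div]

lemma aeval_genβ_minpoly (β : ℝ) : aeval (genβ β) (minpoly ℚ β) = 0 := by
  have h : minpoly ℚ (genβ β) = minpoly ℚ β :=
    (minpoly.algHom_eq (Qbeta β).val Subtype.val_injective (genβ β)).symm
  exact h ▸ minpoly.aeval ℚ (genβ β)

lemma IsPisot.norm_embedding_genβ_lt_one {β : ℝ} (hβ : IsPisot β) (σ : Qbeta β →+* ℂ)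
    (hσ : σ (genβ β) ≠ β) : ‖σ (genβ β)‖ < 1 := by
  refine hβ.2.2 _ ?_ hσ
  have h := aeval_algHom_apply σ.toRatAlgHom (genβ β) (minpoly ℚ β)
  rwa [aeval_genβ_minpoly, map_zero] at h

lemma ringHom_apply_eq_sum_of_coe_eq_sum {β : ℝ} (σ : Qbeta β →+* ℂ) {x : Qbeta β} {k : ℕ}
    {d : ℕ → ℤ} (hx : (x : ℝ) = ∑ i ∈ range k, (d i : ℝ) * β ^ i) :
    σ x = ∑ i ∈ range k, (d i : ℂ) * σ (genβ β) ^ i := by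
  have hxQ : x = ∑ i ∈ range k, (d i : Qbeta β) * genβ β ^ i :=
    Subtype.val_injective (by push_cast [hx]; rfl)
  simp [hxQ]

theorem statement17_general (β : ℝ) (hpu : IsPisotUnit β)
    (σ : Qbeta β →+* ℂ) (hσ : (σ (genβ β)).im ≠ 0) :
    IsCompact (centralTile β σ) := by
  have hβ : 0 < β := one_pos.trans hpu.1.1
  have hz := hpu.1.norm_embedding_genβ_lt_one σ fun h => hσ (by simp [h])
  refine Metric.isCompact_of_isClosed_isBounded isClosed_closure
    ((Metric.isBounded_closedBall (x := 0) (r := β / (1 - ‖σ (genβ β)‖))).subset ?_).closure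
  rintro _ ⟨x, hx, rfl⟩
  obtain ⟨k, d, hd, hxd⟩ := exists_digits_of_mem_intBeta hβ hx
  rw [mem_closedBall_zero_iff, ringHom_apply_eq_sum_of_coe_eq_sum σ hxd]
  refine norm_sum_mul_pow_le hz (fun i => ?_) k
  rw [Complex.norm_intCast, abs_of_nonneg (by exact_mod_cast (hd i).1)]
  exact (hd i).2

theorem statement17 (β : ℝ) (hpu : IsPisotUnit β)
    (hdeg : (minpoly ℚ β).natDegree = 3) (hnr : NonRealConjugates β)
    (σ : Qbeta β →+* ℂ) (hσ : (σ (genβ β)).im ≠ 0) :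
    IsCompact (centralTile β σ) :=
  statement17_general β hpu σ hσ

end
end
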